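/- Let r > 2, s = r+1, and 2r+1 < m < 3r+1. In the {r,r+1}-leaper graph on an m×n board with n ≥ 2s, the vertex (r, r+1) is adjacent to the three vertices (0,0), (2r,0), and (2r+1,1), each of which has degree 2 with (r,r+1) as a forced neighbor; consequently no Hamiltonian circuit exists, since a Hamiltonian circuit would need to use three edges incident to (r,r+1). -/

import Mathlib

/-!
A Hamiltonian circuit passes through every vertex exactly once, so it uses exactly two edges
at each vertex; at a vertex of degree 2 it therefore uses both edges. The three cells
`(0,0)`, `(2r,0)` and `(2r+1,1)` all have degree 2 and share the neighbour `(r,r+1)`, so a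
Hamiltonian circuit would use three edges at `(r,r+1)`.
-/

/-- The `{r,s}`-leaper graph on an `m × n` board: vertices are the cells
`(x,y)` with `0 ≤ x < m`, `0 ≤ y < n`, and two cells are adjacent when
their absolute coordinate differences are `{r, s}`. -/
def leaperGraph (r s m n : ℕ) : SimpleGraph (Fin m × Fin n) :=
  SimpleGraph.fromRel fun p q =>
    (Nat.dist p.1.val q.1.val = r ∧ Nat.dist p.2.val q.2.val = s) ∨
    (Nat.dist p.1.val q.1.val = s ∧ Nat.dist p.2.val q.2.val = r)

/-- A graph has a Hamiltonian circuit. -/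
def HasHamCycle {V : Type*} [DecidableEq V] (G : SimpleGraph V) : Prop :=
  ∃ (v : V) (w : G.Walk v v), w.IsHamiltonianCycle

open SimpleGraph

namespace SimpleGraph.Walk.IsHamiltonianCycle

variable {V : Type*} [DecidableEq V] {G : SimpleGraph V} {v : V} {w : G.Walk v v}

theorem toSubgraph_adj_of_ncard_neighborSet_eq_two (hw : w.IsHamiltonianCycle) {u x : V}
    (hu : (G.neighborSet u).ncard = 2) (hx : G.Adj u x) : w.toSubgraph.Adj u x := by
  have hcycle : (w.toSubgraph.neighborSet u).ncard = 2 :=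
    hw.isCycle.ncard_neighborSet_toSubgraph_eq_two (hw.mem_support u)
  have heq : w.toSubgraph.neighborSet u = G.neighborSet u :=
    Set.eq_of_subset_of_ncard_le (w.toSubgraph.neighborSet_subset u) (by omega)
      (Set.finite_of_ncard_ne_zero (by omega))
  change x ∈ w.toSubgraph.neighborSet u
  exact heq ▸ hx

end SimpleGraph.Walk.IsHamiltonianCycle

theorem SimpleGraph.not_hasHamCycle_of_three_neighbors_ncard_eq_two {V : Type*}
    [DecidableEq V] {G : SimpleGraph V} {v a b c : V}
    (hab : a ≠ b) (hac : a ≠ c) (hbc : b ≠ c)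
    (ha : G.Adj v a) (hb : G.Adj v b) (hc : G.Adj v c)
    (ha₂ : (G.neighborSet a).ncard = 2) (hb₂ : (G.neighborSet b).ncard = 2)
    (hc₂ : (G.neighborSet c).ncard = 2) : ¬ HasHamCycle G := by
  rintro ⟨u, w, hw⟩
  have hforced {x : V} (hx : G.Adj v x) (hx₂ : (G.neighborSet x).ncard = 2) :
      w.toSubgraph.Adj v x :=
    (hw.toSubgraph_adj_of_ncard_neighborSet_eq_two hx₂ hx.symm).symm
  have hsub : {a, b, c} ⊆ w.toSubgraph.neighborSet v := by
    rintro x (rfl | rfl | rfl)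
    exacts [hforced ha ha₂, hforced hb hb₂, hforced hc hc₂]
  have hle := Set.ncard_le_ncard hsub w.finite_neighborSet_toSubgraph
  rw [Set.ncard_eq_three.mpr ⟨a, b, c, hab, hac, hbc, rfl⟩,
    hw.isCycle.ncard_neighborSet_toSubgraph_eq_two (hw.mem_support v)] at hle
  omega

namespace leaperGraph

variable {r s m n : ℕ}

theorem adj_iff {p q : Fin m × Fin n} :
    (leaperGraph r s m n).Adj p q ↔ p ≠ q ∧
      ((Nat.dist p.1.val q.1.val = r ∧ Nat.dist p.2.val q.2.val = s) ∨
       (Nat.dist p.1.val q.1.val = s ∧ Nat.dist p.2.val q.2.val = r)) := by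
  rw [leaperGraph, fromRel_adj, Nat.dist_comm q.1.val, Nat.dist_comm q.2.val, or_self]

theorem neighborSet_origin (hm : r + 1 < m) (hn : r + 1 < n) :
    (leaperGraph r (r + 1) m n).neighborSet (⟨0, by omega⟩, ⟨0, by omega⟩) =
      {(⟨r, by omega⟩, ⟨r + 1, hn⟩), (⟨r + 1, hm⟩, ⟨r, by omega⟩)} := by
  ext ⟨⟨x, hx⟩, ⟨y, hy⟩⟩
  simp only [mem_neighborSet, adj_iff, Set.mem_insert_iff, Set.mem_singleton_iff,
    Prod.ext_iff, Fin.ext_iff, Nat.dist, ne_eq]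
  omega

theorem neighborSet_two_mul_zero (hm₁ : 2 * r < m) (hm₂ : m ≤ 3 * r) (hn : r + 1 < n) :
    (leaperGraph r (r + 1) m n).neighborSet (⟨2 * r, hm₁⟩, ⟨0, by omega⟩) =
      {(⟨r, by omega⟩, ⟨r + 1, hn⟩), (⟨r - 1, by omega⟩, ⟨r, by omega⟩)} := by
  ext ⟨⟨x, hx⟩, ⟨y, hy⟩⟩
  simp only [mem_neighborSet, adj_iff, Set.mem_insert_iff, Set.mem_singleton_iff,
    Prod.ext_iff, Fin.ext_iff, Nat.dist, ne_eq]
  omega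

theorem neighborSet_two_mul_add_one_one (hr : 2 ≤ r) (hm₁ : 2 * r + 1 < m)
    (hm₂ : m ≤ 3 * r + 1) (hn : r + 2 < n) :
    (leaperGraph r (r + 1) m n).neighborSet (⟨2 * r + 1, hm₁⟩, ⟨1, by omega⟩) =
      {(⟨r, by omega⟩, ⟨r + 1, by omega⟩), (⟨r + 1, by omega⟩, ⟨r + 2, hn⟩)} := by
  ext ⟨⟨x, hx⟩, ⟨y, hy⟩⟩
  simp only [mem_neighborSet, adj_iff, Set.mem_insert_iff, Set.mem_singleton_iff,
    Prod.ext_iff, Fin.ext_iff, Nat.dist, ne_eq]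
  omega

end leaperGraph

/-- The "snag" at `(r, r+1)`: for `r > 2`, `2r+1 < m < 3r+1`, `n ≥ 2(r+1)`,
the vertex `(r, r+1)` is adjacent to `(0,0)`, `(2r,0)` and `(2r+1,1)`, each of
which has degree 2 (so each forces its edge to `(r,r+1)` into any Hamiltonian
circuit); hence no Hamiltonian circuit exists. -/
theorem leaper_snag_no_hamCycle
    (r m n : ℕ) (hm1 : 2 * r + 1 < m) (hm2 : m < 3 * r + 1)
    (hn : 2 * (r + 1) ≤ n) :
    let G := leaperGraph r (r + 1) m n
    let v : Fin m × Fin n := (⟨r, by omega⟩, ⟨r + 1, by omega⟩)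
    let a : Fin m × Fin n := (⟨0, by omega⟩, ⟨0, by omega⟩)
    let b : Fin m × Fin n := (⟨2 * r, by omega⟩, ⟨0, by omega⟩)
    let c : Fin m × Fin n := (⟨2 * r + 1, by omega⟩, ⟨1, by omega⟩)
    G.Adj v a ∧ G.Adj v b ∧ G.Adj v c ∧
      (G.neighborSet a).ncard = 2 ∧ (G.neighborSet b).ncard = 2 ∧
      (G.neighborSet c).ncard = 2 ∧ ¬ HasHamCycle G := by
  intro G v a b c
  have ha := leaperGraph.neighborSet_origin (r := r) (m := m) (n := n) (by omega) (by omega)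
  have hb := leaperGraph.neighborSet_two_mul_zero (r := r) (m := m) (n := n)
    (by omega) (by omega) (by omega)
  have hc := leaperGraph.neighborSet_two_mul_add_one_one (r := r) (m := m) (n := n)
    (by omega) hm1 (by omega) (by omega)
  have hva : G.Adj v a := (ha.symm ▸ Set.mem_insert _ _ : v ∈ G.neighborSet a).symm
  have hvb : G.Adj v b := (hb.symm ▸ Set.mem_insert _ _ : v ∈ G.neighborSet b).symm
  have hvc : G.Adj v c := (hc.symm ▸ Set.mem_insert _ _ : v ∈ G.neighborSet c).symm
  have ha₂ : (G.neighborSet a).ncard = 2 := by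
    rw [ha, Set.ncard_pair (by simp [Fin.ext_iff])]
  have hb₂ : (G.neighborSet b).ncard = 2 := by
    rw [hb, Set.ncard_pair (by simp [Fin.ext_iff])]
  have hc₂ : (G.neighborSet c).ncard = 2 := by
    rw [hc, Set.ncard_pair (by simp [Fin.ext_iff])]
  refine ⟨hva, hvb, hvc, ha₂, hb₂, hc₂, ?_⟩
  exact not_hasHamCycle_of_three_neighbors_ncard_eq_two
    (by simp [a, b, Fin.ext_iff]; omega) (by simp [a, c, Fin.ext_iff]) (by simp [b, c, Fin.ext_iff])
    hva hvb hvc ha₂ hb₂ hc₂
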